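/- arXiv:2007.04276 — 3 statements merged into one kernel-verified Lean document; each statement's English description precedes it below -/
import Mathlib

section
/- Let ρ be a density matrix on ℂ^d ⊗ ℂ^D (a complex matrix indexed by (Fin d × Fin D)), let {e_i}_{i∈I} (I a finite index set) be an orthonormal family in ℂ^d, and let {Π_i}_{i∈I} be orthogonal projectors on ℂ^D (Π_i² = Π_i = Π_i†) with Π_i Π_j = 0 for i ≠ j. If ∑_{i∈I} (|e_i⟩⟨e_i| ⊗ Π_i) ρ (|e_i⟩⟨e_i| ⊗ Π_i) = ρ, then there exist nonnegative reals p_i with ∑_i p_i = 1 and density matrices ϱ_i on ℂ^D with Π_i ϱ_i Π_i = ϱ_i whenever p_i > 0, such that ρ = ∑_i p_i |e_i⟩⟨e_i| ⊗ ϱ_i. -/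
open scoped Kronecker Matrix ComplexOrder BigOperators
open Matrix

noncomputable section

/-- The rank-one operator `|v⟩⟨w| = v wᴴ`. -/
def ketBra {n : Type*} (v w : n → ℂ) : Matrix n n ℂ := Matrix.vecMulVec v (star w)

/-- A density matrix: positive semidefinite with unit trace. -/
def IsDensityMatrix {n : Type*} [Fintype n] (ρ : Matrix n n ℂ) : Prop :=
  ρ.PosSemidef ∧ ρ.trace = 1

/-- An orthonormal family of vectors. -/
def OrthonormalFamily {n I : Type*} [Fintype n] [DecidableEq I] (e : I → n → ℂ) : Prop :=
  ∀ i j, star (e i) ⬝ᵥ e j = (if i = j then 1 else 0)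

/-!
Writing `|e⟩⟨e| ⊗ Π = K Π Kᴴ` with `K = |e⟩ ⊗ 1`, the `i`-th term of the Bohr sum becomes
`|eᵢ⟩⟨eᵢ| ⊗ σᵢ` with `σᵢ = Πᵢ Kᵢᴴ ρ Kᵢ Πᵢ`, a positive semidefinite compression of `ρ` that is
invariant under `Πᵢ · Πᵢ`. Since the `eᵢ` are unit vectors, `∑ tr σᵢ = tr ρ = 1`, so
`pᵢ = tr σᵢ` and `ϱᵢ = σᵢ / pᵢ` (any density matrix when `pᵢ = 0`) give the decomposition.
-/

/-- `|v⟩ ⊗ 1`, the matrix of `y ↦ v ⊗ y`. -/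
def ketKroneckerOne {n : Type*} (m : Type*) [DecidableEq m] (v : n → ℂ) : Matrix (n × m) m ℂ :=
  Matrix.of fun ax y => v ax.1 * (1 : Matrix m m ℂ) ax.2 y

section

variable {n m : Type*} [Fintype m] [DecidableEq m]

lemma ketBra_kronecker_eq (v w : n → ℂ) (Q : Matrix m m ℂ) :
    ketBra v w ⊗ₖ Q = ketKroneckerOne m v * Q * (ketKroneckerOne m w)ᴴ := by
  ext ⟨a, x⟩ ⟨b, z⟩
  simp only [ketBra, kroneckerMap_apply, vecMulVec_apply, Pi.star_apply, RCLike.star_def,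
    ketKroneckerOne, one_apply, apply_ite, mul_one, mul_zero, Matrix.mul_apply, of_apply, ite_mul,
    zero_mul, Finset.sum_ite_eq, Finset.mem_univ, ↓reduceIte, conjTranspose_apply, star_zero]
  ring

lemma ketBra_kronecker_mul_mul [Fintype n] (v : n → ℂ) (Q : Matrix m m ℂ)
    (ρ : Matrix (n × m) (n × m) ℂ) :
    (ketBra v v ⊗ₖ Q) * ρ * (ketBra v v ⊗ₖ Q) =
      ketBra v v ⊗ₖ (Q * ((ketKroneckerOne m v)ᴴ * ρ * ketKroneckerOne m v) * Q) := by
  simp only [ketBra_kronecker_eq, Matrix.mul_assoc]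

omit [DecidableEq m] in
lemma trace_ketBra_kronecker [Fintype n] (v : n → ℂ) (Q : Matrix m m ℂ) :
    (ketBra v v ⊗ₖ Q).trace = (star v ⬝ᵥ v) * Q.trace := by
  rw [trace_kronecker, ketBra, trace_vecMulVec, dotProduct_comm]

end

lemma isDensityMatrix_maximallyMixed (n : Type*) [Fintype n] [DecidableEq n] [Nonempty n] :
    IsDensityMatrix ((Fintype.card n : ℂ)⁻¹ • (1 : Matrix n n ℂ)) := by
  refine ⟨PosSemidef.one.smul ?_, ?_⟩
  · rw [← Complex.ofReal_natCast, ← Complex.ofReal_inv]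
    exact Complex.zero_le_real.mpr (by positivity)
  · rw [trace_smul, trace_one, smul_eq_mul, inv_mul_cancel₀ (by simp)]

lemma Matrix.PosSemidef.exists_eq_smul_isDensityMatrix {n : Type*} [Fintype n] [DecidableEq n]
    [Nonempty n] {σ : Matrix n n ℂ} (hσ : σ.PosSemidef) :
    ∃ (p : ℝ) (ϱ : Matrix n n ℂ), 0 ≤ p ∧ (p : ℂ) = σ.trace ∧ IsDensityMatrix ϱ ∧
      σ = (p : ℂ) • ϱ := by
  set p := σ.trace.re
  have hp : (p : ℂ) = σ.trace := (Complex.eq_re_of_ofReal_le hσ.trace_nonneg).symm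
  have hp0 : 0 ≤ p := Complex.zero_le_real.mp (hp ▸ hσ.trace_nonneg)
  rcases hp0.eq_or_lt with hzero | hpos
  · have hσ0 : σ = 0 := hσ.trace_eq_zero_iff.mp (by rw [← hp, ← hzero, Complex.ofReal_zero])
    exact ⟨p, _, hp0, hp, isDensityMatrix_maximallyMixed n, by simp [hσ0, ← hzero]⟩
  refine ⟨p, ((p⁻¹ : ℝ) : ℂ) • σ, hpos.le, hp, ⟨hσ.smul ?_, ?_⟩, ?_⟩
  · exact Complex.zero_le_real.mpr (inv_nonneg.mpr hpos.le)
  · rw [trace_smul, ← hp, smul_eq_mul, ← Complex.ofReal_mul, inv_mul_cancel₀ hpos.ne',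
      Complex.ofReal_one]
  · rw [smul_smul, ← Complex.ofReal_mul, mul_inv_cancel₀ hpos.ne', Complex.ofReal_one, one_smul]

theorem stmt_0_general {d D : ℕ} {I : Type*} [Fintype I] [DecidableEq I]
    (ρ : Matrix (Fin d × Fin D) (Fin d × Fin D) ℂ) (hρ : IsDensityMatrix ρ)
    (e : I → Fin d → ℂ) (he : OrthonormalFamily e)
    (P : I → Matrix (Fin D) (Fin D) ℂ)
    (hidem : ∀ i, P i * P i = P i)
    (hherm : ∀ i, (P i)ᴴ = P i)
    (hBohr : ∑ i, (ketBra (e i) (e i) ⊗ₖ P i) * ρ * (ketBra (e i) (e i) ⊗ₖ P i) = ρ) :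
    ∃ (p : I → ℝ) (ϱ : I → Matrix (Fin D) (Fin D) ℂ),
      (∀ i, 0 ≤ p i) ∧ (∑ i, p i = 1) ∧
      (∀ i, IsDensityMatrix (ϱ i)) ∧
      (∀ i, 0 < p i → P i * ϱ i * P i = ϱ i) ∧
      ρ = ∑ i, (p i : ℂ) • (ketBra (e i) (e i) ⊗ₖ ϱ i) := by
  obtain ⟨hρpsd, hρtr⟩ := hρ
  have : Nonempty (Fin D) := by
    by_contra h
    rw [not_nonempty_iff] at h
    simp [trace_eq_zero_of_isEmpty] at hρtr
  set σ : I → Matrix (Fin D) (Fin D) ℂ := fun i =>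
    P i * ((ketKroneckerOne (Fin D) (e i))ᴴ * ρ * ketKroneckerOne (Fin D) (e i)) * P i
  have hρσ : ρ = ∑ i, ketBra (e i) (e i) ⊗ₖ σ i := by
    simp only [σ, ← ketBra_kronecker_mul_mul, hBohr]
  have hσ : ∀ i, (σ i).PosSemidef := fun i => by
    simpa only [σ, conjTranspose_mul, hherm, Matrix.mul_assoc] using
      hρpsd.conjTranspose_mul_mul_same (ketKroneckerOne (Fin D) (e i) * P i)
  have hPσP : ∀ i, P i * σ i * P i = σ i := fun i => by
    simp only [σ, ← Matrix.mul_assoc, hidem]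
    simp only [Matrix.mul_assoc, hidem]
  have hnorm : ∀ i, star (e i) ⬝ᵥ e i = 1 := fun i => by simpa using he i i
  have htr : ∑ i, (σ i).trace = 1 := by
    simpa [hρσ, trace_sum, trace_ketBra_kronecker, hnorm] using hρtr
  choose p ϱ hp0 hpσ hϱ hσϱ using fun i => (hσ i).exists_eq_smul_isDensityMatrix
  refine ⟨p, ϱ, hp0, ?_, hϱ, fun i hpos => ?_, hρσ.trans (Finset.sum_congr rfl fun i _ => ?_)⟩
  · exact_mod_cast (Finset.sum_congr rfl fun i _ => hpσ i).trans htr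
  · have hp : (p i : ℂ) ≠ 0 := Complex.ofReal_ne_zero.mpr hpos.ne'
    apply smul_right_injective _ hp
    dsimp only
    rw [← hσϱ, ← hPσP i, hσϱ, Matrix.mul_smul, Matrix.smul_mul]
  · rw [hσϱ i, kronecker_smul]

/-- Bohr non-disturbance of a product projective measurement forces a
classical-quantum (block) structure. -/
theorem stmt_0 {d D : ℕ} {I : Type*} [Fintype I] [DecidableEq I]
    (ρ : Matrix (Fin d × Fin D) (Fin d × Fin D) ℂ) (hρ : IsDensityMatrix ρ)
    (e : I → Fin d → ℂ) (he : OrthonormalFamily e)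
    (P : I → Matrix (Fin D) (Fin D) ℂ)
    (hidem : ∀ i, P i * P i = P i)
    (hherm : ∀ i, (P i)ᴴ = P i)
    (horth : ∀ i j, i ≠ j → P i * P j = 0)
    (hBohr : ∑ i, (ketBra (e i) (e i) ⊗ₖ P i) * ρ * (ketBra (e i) (e i) ⊗ₖ P i) = ρ) :
    ∃ (p : I → ℝ) (ϱ : I → Matrix (Fin D) (Fin D) ℂ),
      (∀ i, 0 ≤ p i) ∧ (∑ i, p i = 1) ∧
      (∀ i, IsDensityMatrix (ϱ i)) ∧
      (∀ i, 0 < p i → P i * ϱ i * P i = ϱ i) ∧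
      ρ = ∑ i, (p i : ℂ) • (ketBra (e i) (e i) ⊗ₖ ϱ i) :=
  stmt_0_general ρ hρ e he P hidem hherm hBohr
end
end

section
/- Let ϱ_i (i in a finite index set I) be positive semidefinite matrices on the N-fold tensor product ℂ^{D_1} ⊗ ⋯ ⊗ ℂ^{D_N}, and for each k let {Π_i^k}_{i∈I} be orthogonal projectors on ℂ^{D_k} with Π_i^k Π_j^k = 0 for i ≠ j. Assume (Π_i^1 ⊗ ⋯ ⊗ Π_i^N) ϱ_i (Π_i^1 ⊗ ⋯ ⊗ Π_i^N) = ϱ_i for every i. Then for every nonempty subset K ⊆ {1,…,N}, the reductions ϱ_i^K obtained by taking the partial trace of ϱ_i over all tensor factors not in K satisfy: (⊗_{k∈K} Π_i^k) ϱ_i^K (⊗_{k∈K} Π_i^k) = ϱ_i^K for every i, and ϱ_i^K ϱ_j^K = 0 for all i ≠ j. -/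
/-!
Split each product projector as `⨂ₖ Πₖ = (Π_K ⊗ 1)(1 ⊗ Π_{Kᶜ}) = (1 ⊗ Π_{Kᶜ})(Π_K ⊗ 1)`.
Since the partial trace over `Kᶜ` is a bimodule map for operators acting on `K` alone,
`ϱ_i = (⨂ₖ Π_i^k) ϱ_i (⨂ₖ Π_i^k)` reduces to `ϱ_i^K = Q_i X_i Q_i` with `Q_i = ⨂_{k ∈ K} Π_i^k`.
The `Q_i` are idempotent, and for `i ≠ j` the product `Q_i Q_j` vanishes because `K` is nonempty,
so it contains a factor `Π_i^k Π_j^k = 0`.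
-/

open scoped Kronecker Matrix ComplexOrder BigOperators
open Matrix

noncomputable section

/-- The `N`-fold Kronecker (tensor) product of a family of matrices. -/
def tensorFamily {N : ℕ} {D : Fin N → ℕ} (M : ∀ k, Matrix (Fin (D k)) (Fin (D k)) ℂ) :
    Matrix (∀ k, Fin (D k)) (∀ k, Fin (D k)) ℂ :=
  fun a a' => ∏ k, M k (a k) (a' k)

/-- The Kronecker (tensor) product of the matrices `M k` over the factors `k ∈ K`. -/
def tensorOn {N : ℕ} {D : Fin N → ℕ} (K : Finset (Fin N))
    (M : ∀ k, Matrix (Fin (D k)) (Fin (D k)) ℂ) :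
    Matrix (∀ k : K, Fin (D k.1)) (∀ k : K, Fin (D k.1)) ℂ :=
  fun a a' => ∏ k : K, M k.1 (a k) (a' k)

/-- The partial trace of a matrix on an `N`-fold tensor product over all
tensor factors *not* in `K` (entrywise: sum over equal indices in the traced factors). -/
def reduceTo {N : ℕ} {D : Fin N → ℕ} (K : Finset (Fin N))
    (M : Matrix (∀ k, Fin (D k)) (∀ k, Fin (D k)) ℂ) :
    Matrix (∀ k : K, Fin (D k.1)) (∀ k : K, Fin (D k.1)) ℂ :=
  fun a a' => ∑ b : ∀ k : {k : Fin N // k ∉ K}, Fin (D k.1),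
    M (fun k => if h : k ∈ K then a ⟨k, h⟩ else b ⟨k, h⟩)
      (fun k => if h : k ∈ K then a' ⟨k, h⟩ else b ⟨k, h⟩)

/-- The single-party reduction: the partial trace over all tensor factors except the `k`-th. -/
def reduceSingle {N : ℕ} {D : Fin N → ℕ} (k : Fin N)
    (M : Matrix (∀ l, Fin (D l)) (∀ l, Fin (D l)) ℂ) :
    Matrix (Fin (D k)) (Fin (D k)) ℂ :=
  fun a a' => ∑ b : ∀ l : {l : Fin N // l ≠ k}, Fin (D l.1),
    M (fun l => if h : l = k then cast (congrArg (fun i => Fin (D i)) h.symm) a else b ⟨l, h⟩)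
      (fun l => if h : l = k then cast (congrArg (fun i => Fin (D i)) h.symm) a' else b ⟨l, h⟩)

section

variable {N : ℕ} {D : Fin N → ℕ}

def glue (K : Finset (Fin N)) (a : ∀ k : K, Fin (D k.1))
    (b : ∀ k : {k : Fin N // k ∉ K}, Fin (D k.1)) : ∀ k, Fin (D k) :=
  (Equiv.piEquivPiSubtypeProd (· ∈ K) (fun k => Fin (D k))).symm (a, b)

lemma reduceTo_apply (K : Finset (Fin N)) (M : Matrix (∀ k, Fin (D k)) (∀ k, Fin (D k)) ℂ)
    (a a' : ∀ k : K, Fin (D k.1)) :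
    reduceTo K M a a' = ∑ b, M (glue K a b) (glue K a' b) := rfl

lemma sum_glue {R : Type*} [AddCommMonoid R] (K : Finset (Fin N)) (f : (∀ k, Fin (D k)) → R) :
    ∑ x, f x = ∑ a, ∑ b, f (glue K a b) := by
  rw [← Equiv.sum_comp (Equiv.piEquivPiSubtypeProd (· ∈ K) (fun k => Fin (D k))).symm f,
    Fintype.sum_prod_type]
  rfl

lemma tensorFamily_glue (K : Finset (Fin N)) (M : ∀ k, Matrix (Fin (D k)) (Fin (D k)) ℂ)
    (a a' : ∀ k : K, Fin (D k.1)) (b b' : ∀ k : {k : Fin N // k ∉ K}, Fin (D k.1)) :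
    tensorFamily M (glue K a b) (glue K a' b')
      = tensorOn K M a a' * ∏ k : {k : Fin N // k ∉ K}, M k.1 (b k) (b' k) := by
  rw [tensorFamily, tensorOn, ← Fintype.prod_subtype_mul_prod_subtype (· ∈ K)]
  congr 1 <;> exact Finset.prod_congr (by congr!) fun k _ => by simp [glue, k.2]

lemma prod_one_apply {ι : Type*} [Fintype ι] {β : ι → Type*} [∀ i, DecidableEq (β i)]
    {R : Type*} [CommMonoidWithZero R] (b d : ∀ i, β i) :
    ∏ i, (1 : Matrix (β i) (β i) R) (b i) (d i) = if b = d then 1 else 0 := by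
  simp only [Matrix.one_apply, Fintype.prod_boole, funext_iff]

lemma tensorFamily_mul (M M' : ∀ k, Matrix (Fin (D k)) (Fin (D k)) ℂ) :
    tensorFamily M * tensorFamily M' = tensorFamily (fun k => M k * M' k) := by
  ext a a'
  simp only [Matrix.mul_apply, tensorFamily, ← Finset.prod_mul_distrib]
  rw [Finset.prod_univ_sum (fun _ => Finset.univ)
      (fun k t => M k (a k) t * M' k t (a' k)), Fintype.piFinset_univ]

lemma tensorOn_mul (K : Finset (Fin N)) (M M' : ∀ k, Matrix (Fin (D k)) (Fin (D k)) ℂ) :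
    tensorOn K M * tensorOn K M' = tensorOn K (fun k => M k * M' k) := by
  ext a a'
  simp only [Matrix.mul_apply, tensorOn, ← Finset.prod_mul_distrib]
  rw [Finset.prod_univ_sum (fun _ => Finset.univ)
      (fun (k : K) t => M k.1 (a k) t * M' k.1 t (a' k)), Fintype.piFinset_univ]

lemma tensorOn_eq_zero_of_mem {K : Finset (Fin N)} {M : ∀ k, Matrix (Fin (D k)) (Fin (D k)) ℂ}
    {k : Fin N} (hk : k ∈ K) (hM : M k = 0) : tensorOn K M = 0 := by
  ext a a'
  exact Finset.prod_eq_zero (Finset.mem_univ ⟨k, hk⟩) (by simp [hM])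

lemma tensorFamily_padOne_glue (K : Finset (Fin N)) (A : ∀ k, Matrix (Fin (D k)) (Fin (D k)) ℂ)
    (a a' : ∀ k : K, Fin (D k.1)) (b b' : ∀ k : {k : Fin N // k ∉ K}, Fin (D k.1)) :
    tensorFamily (fun k => if k ∈ K then A k else 1) (glue K a b) (glue K a' b')
      = tensorOn K A a a' * if b = b' then 1 else 0 := by
  rw [tensorFamily_glue, ← prod_one_apply]
  congr 1 <;> exact Finset.prod_congr rfl fun k _ => by simp [k.2]

lemma reduceTo_tensorFamily_mul (K : Finset (Fin N)) (A : ∀ k, Matrix (Fin (D k)) (Fin (D k)) ℂ)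
    (M : Matrix (∀ k, Fin (D k)) (∀ k, Fin (D k)) ℂ) :
    reduceTo K (tensorFamily (fun k => if k ∈ K then A k else 1) * M)
      = tensorOn K A * reduceTo K M := by
  ext a a'
  simp only [reduceTo_apply, Matrix.mul_apply, sum_glue K, tensorFamily_padOne_glue, mul_ite,
    mul_one, mul_zero, ite_mul, zero_mul, Finset.sum_ite_eq, Finset.mem_univ, if_true,
    Finset.mul_sum]
  exact Finset.sum_comm

lemma reduceTo_mul_tensorFamily (K : Finset (Fin N)) (A : ∀ k, Matrix (Fin (D k)) (Fin (D k)) ℂ)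
    (M : Matrix (∀ k, Fin (D k)) (∀ k, Fin (D k)) ℂ) :
    reduceTo K (M * tensorFamily (fun k => if k ∈ K then A k else 1))
      = reduceTo K M * tensorOn K A := by
  ext a a'
  simp only [reduceTo_apply, Matrix.mul_apply, sum_glue K, tensorFamily_padOne_glue, mul_ite,
    mul_one, mul_zero, Finset.sum_ite_eq', Finset.mem_univ, if_true, Finset.sum_mul]
  exact Finset.sum_comm

lemma reduceTo_tensorFamily_conj (K : Finset (Fin N)) (P : ∀ k, Matrix (Fin (D k)) (Fin (D k)) ℂ)
    (M : Matrix (∀ k, Fin (D k)) (∀ k, Fin (D k)) ℂ) :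
    reduceTo K (tensorFamily P * M * tensorFamily P)
      = tensorOn K P * reduceTo K (tensorFamily (fun k => if k ∈ K then 1 else P k) * M
          * tensorFamily (fun k => if k ∈ K then 1 else P k)) * tensorOn K P := by
  set E := tensorFamily (fun k => if k ∈ K then P k else 1)
  set R := tensorFamily (fun k => if k ∈ K then 1 else P k)
  obtain ⟨hER, hRE⟩ : E * R = tensorFamily P ∧ R * E = tensorFamily P := by
    simp only [E, R, tensorFamily_mul]
    constructor <;> congr 1 <;> funext k <;> split_ifs <;> simp
  rw [← reduceTo_tensorFamily_mul, ← reduceTo_mul_tensorFamily]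
  nth_rw 1 [← hER]
  rw [← hRE]
  simp only [E, mul_assoc]

lemma IsIdempotentElem.mul_mul_mul_self {S : Type*} [Semigroup S] {q : S} (hq : IsIdempotentElem q)
    (x : S) : q * (q * x * q) * q = q * x * q := by
  simp only [← mul_assoc, hq.eq]
  rw [mul_assoc _ q q, hq.eq]

end

theorem stmt_2_general {N : ℕ} {D : Fin N → ℕ} {I : Type*}
    (ϱ : I → Matrix (∀ k, Fin (D k)) (∀ k, Fin (D k)) ℂ)
    (P : ∀ (k : Fin N), I → Matrix (Fin (D k)) (Fin (D k)) ℂ)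
    (hidem : ∀ k i, P k i * P k i = P k i)
    (horth : ∀ k, ∀ i j, i ≠ j → P k i * P k j = 0)
    (hpres : ∀ i,
      tensorFamily (fun k => P k i) * ϱ i * tensorFamily (fun k => P k i) = ϱ i) :
    ∀ K : Finset (Fin N), K.Nonempty →
      (∀ i, tensorOn K (fun k => P k i) * reduceTo K (ϱ i) * tensorOn K (fun k => P k i)
          = reduceTo K (ϱ i)) ∧
      (∀ i j, i ≠ j → reduceTo K (ϱ i) * reduceTo K (ϱ j) = 0) := by
  rintro K ⟨k₀, hk₀⟩
  set Q := fun i => tensorOn K (fun k => P k i)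
  have hQ : ∀ i, IsIdempotentElem (Q i) := fun i => by
    simp only [IsIdempotentElem, Q, tensorOn_mul, hidem]
  have hQQ : ∀ i j, i ≠ j → Q i * Q j = 0 := fun i j hij =>
    (tensorOn_mul K _ _).trans (tensorOn_eq_zero_of_mem hk₀ (horth k₀ i j hij))
  have hred : ∀ i, ∃ X, reduceTo K (ϱ i) = Q i * X * Q i := fun i =>
    ⟨_, by rw [← hpres i, reduceTo_tensorFamily_conj]⟩
  refine ⟨fun i => ?_, fun i j hij => ?_⟩
  · obtain ⟨X, hX⟩ := hred i
    rw [hX]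
    exact (hQ i).mul_mul_mul_self X
  · obtain ⟨X, hX⟩ := hred i
    obtain ⟨Y, hY⟩ := hred j
    simp only [hX, hY, mul_assoc]
    rw [← mul_assoc (Q i) (Q j), hQQ i j hij, zero_mul, mul_zero, mul_zero]

/-- Fine-grained preservation and orthogonality of generalized SBS states: every
reduction to a subset of subenvironments remains preserved by the local
measurements and one-shot distinguishable. -/
theorem stmt_2 {N : ℕ} {D : Fin N → ℕ} {I : Type*} [Fintype I]
    (ϱ : I → Matrix (∀ k, Fin (D k)) (∀ k, Fin (D k)) ℂ)
    (hpsd : ∀ i, (ϱ i).PosSemidef)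
    (P : ∀ (k : Fin N), I → Matrix (Fin (D k)) (Fin (D k)) ℂ)
    (hidem : ∀ k i, P k i * P k i = P k i)
    (hherm : ∀ k i, (P k i)ᴴ = P k i)
    (horth : ∀ k, ∀ i j, i ≠ j → P k i * P k j = 0)
    (hpres : ∀ i,
      tensorFamily (fun k => P k i) * ϱ i * tensorFamily (fun k => P k i) = ϱ i) :
    ∀ K : Finset (Fin N), K.Nonempty →
      (∀ i, tensorOn K (fun k => P k i) * reduceTo K (ϱ i) * tensorOn K (fun k => P k i)
          = reduceTo K (ϱ i)) ∧
      (∀ i j, i ≠ j → reduceTo K (ϱ i) * reduceTo K (ϱ j) = 0) :=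
  stmt_2_general ϱ P hidem horth hpres
end
end

section
/- Fidelity formula in the spin-spin model: let λ ∈ [0,1], α, β, γ ∈ ℝ, let R(α,β,γ) = exp(−iα σ_z/2)·exp(−iβ σ_y/2)·exp(−iγ σ_z/2), and let ρ₀ = R(α,β,γ) · diag(λ, 1−λ) · R(α,β,γ)†. Then for every θ ∈ ℝ, the fidelity between ρ₀ and its rotated version satisfies F(ρ₀, exp(−iθσ_z) ρ₀ exp(iθσ_z)) = √(1 − (2λ−1)² sin²β sin²θ). -/
open scoped Kronecker Matrix ComplexOrder BigOperators
open Matrix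

noncomputable section

open scoped Classical

/-- The positive semidefinite square root of a positive semidefinite matrix
(junk value `0` on non-PSD input). -/
def msqrt {n : Type*} [Fintype n] [DecidableEq n] (A : Matrix n n ℂ) : Matrix n n ℂ :=
  if h : A.PosSemidef then (h.1.eigenvectorUnitary : Matrix n n ℂ) *
    diagonal ((↑) ∘ Real.sqrt ∘ h.1.eigenvalues) * (star h.1.eigenvectorUnitary : Matrix n n ℂ)
  else 0

/-- The fidelity `F(ρ,σ) = tr √(√ρ σ √ρ)` of positive semidefinite matrices. -/
def fidelity {n : Type*} [Fintype n] [DecidableEq n] (ρ σ : Matrix n n ℂ) : ℂ :=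
  (msqrt (msqrt ρ * σ * msqrt ρ)).trace

/-- The Pauli `y` matrix. -/
def σy : Matrix (Fin 2) (Fin 2) ℂ := !![0, -Complex.I; Complex.I, 0]

/-- The Pauli `z` matrix. -/
def σz : Matrix (Fin 2) (Fin 2) ℂ := !![1, 0; 0, -1]

/-- The Euler-angle parametrization of `SU(2)`:
`R(α,β,γ) = exp(−iασ_z/2) exp(−iβσ_y/2) exp(−iγσ_z/2)`. -/
def eulerR (α β γ : ℝ) : Matrix (Fin 2) (Fin 2) ℂ :=
  NormedSpace.exp ((-(Complex.I * (α : ℂ) / 2)) • σz) *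
  NormedSpace.exp ((-(Complex.I * (β : ℂ) / 2)) • σy) *
  NormedSpace.exp ((-(Complex.I * (γ : ℂ) / 2)) • σz)

/-!
If `S = √M` for a positive semidefinite 2 × 2 matrix `M`, Cayley–Hamilton gives
`tr M = (tr S)² - 2 det S` and `det M = (det S)²`; as `tr S, det S ≥ 0` this pins down
`tr √M = √(tr M + 2 √(det M))`. For `M = √ρ σ √ρ` it yields
`F(ρ, σ)² = tr(ρσ) + 2 √(det ρ det σ)`.
When `σ = W ρ W†` with `W = diag(w₀, w₁)` a diagonal unitary, `det σ = det ρ` and expanding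
`tr(ρσ)` gives `F² = 1 - |ρ₀₁|² |w₀ - w₁|²`; for `W = exp(-iθσ_z)` this is
`1 - 4 |ρ₀₁|² sin² θ`. In `ρ₀ = R diag(λ, 1 - λ) R†` the `γ`-rotation commutes with the
diagonal state and the `α`-rotation only changes the phase of `ρ₀₁`, so
`2 |ρ₀₁| = |2λ - 1| |sin β|`; the rotations are explicit because `σ_y² = σ_z² = 1` gives
`exp(zσ) = cosh z + sinh z σ`.
-/

section Involution

variable {A : Type*} [Ring A] [TopologicalSpace A] [IsTopologicalRing A] [T2Space A]
  [Algebra ℂ A] [ContinuousSMul ℂ A]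

theorem exp_smul_of_mul_self_eq_one {a : A} (ha : a * a = 1) (z : ℂ) :
    NormedSpace.exp (z • a) = Complex.cosh z • (1 : A) + Complex.sinh z • a := by
  have hpow (n : ℕ) : a ^ (2 * n) = 1 := by rw [pow_mul, sq, ha, one_pow]
  rw [NormedSpace.exp_eq_tsum ℂ]
  refine HasSum.tsum_eq (HasSum.even_add_odd ?_ ?_)
  · convert (Complex.hasSum_cosh z).smul_const (1 : A) using 2 with n
    rw [smul_pow, hpow, smul_smul, div_eq_inv_mul]
  · convert (Complex.hasSum_sinh z).smul_const a using 2 with n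
    rw [smul_pow, pow_succ a, hpow, one_mul, smul_smul, div_eq_inv_mul]

end Involution

lemma σy_mul_self : σy * σy = 1 := by
  ext i j; fin_cases i <;> fin_cases j <;> simp [σy]

lemma σz_mul_self : σz * σz = 1 := by
  ext i j; fin_cases i <;> fin_cases j <;> simp [σz]

def expPhases (z : ℂ) : Fin 2 → ℂ := ![Complex.exp z, Complex.exp (-z)]

def rotY (x : ℝ) : Matrix (Fin 2) (Fin 2) ℂ :=
  !![(Real.cos x : ℂ), -Real.sin x; Real.sin x, Real.cos x]

lemma exp_smul_σz (z : ℂ) : NormedSpace.exp (z • σz) = diagonal (expPhases z) := by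
  rw [exp_smul_of_mul_self_eq_one σz_mul_self, expPhases, ← Complex.cosh_add_sinh,
    ← Complex.cosh_sub_sinh]
  ext i j; fin_cases i <;> fin_cases j <;> simp [σz, sub_eq_add_neg]

lemma σz_conjTranspose : σzᴴ = σz := by
  ext i j; fin_cases i <;> fin_cases j <;> simp [σz]

lemma exp_smul_σz_conjTranspose (z : ℂ) :
    (NormedSpace.exp (z • σz))ᴴ = NormedSpace.exp (star z • σz) := by
  rw [← exp_conjTranspose, conjTranspose_smul, σz_conjTranspose]

lemma exp_neg_I_mul_div_two_smul_σy (x : ℝ) :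
    NormedSpace.exp ((-(Complex.I * x / 2)) • σy) = rotY (x / 2) := by
  have hx : Complex.I * x / 2 = ((x / 2 : ℝ) : ℂ) * Complex.I := by push_cast; ring
  rw [exp_smul_of_mul_self_eq_one σy_mul_self, Complex.cosh_neg, Complex.sinh_neg, hx,
    Complex.cosh_mul_I, Complex.sinh_mul_I]
  ext i j; fin_cases i <;> fin_cases j <;> simp [σy, rotY, mul_assoc]

open scoped MatrixOrder

section Msqrt

variable {n : Type*} [Fintype n] [DecidableEq n] {A : Matrix n n ℂ}

lemma msqrt_eq_cfcSqrt (hA : A.PosSemidef) : msqrt A = CFC.sqrt A := by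
  rw [CFC.sqrt_eq_real_sqrt A hA.nonneg, cfcₙ_eq_cfc, hA.1.cfc_eq, msqrt, dif_pos hA]
  rfl

lemma posSemidef_msqrt (hA : A.PosSemidef) : (msqrt A).PosSemidef :=
  msqrt_eq_cfcSqrt hA ▸ (CFC.sqrt_nonneg A).posSemidef

lemma msqrt_mul_self (hA : A.PosSemidef) : msqrt A * msqrt A = A :=
  msqrt_eq_cfcSqrt hA ▸ CFC.sqrt_mul_sqrt_self A hA.nonneg

end Msqrt

lemma Matrix.trace_mul_self_fin_two {R : Type*} [CommRing R] (S : Matrix (Fin 2) (Fin 2) R) :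
    (S * S).trace = S.trace ^ 2 - 2 * S.det := by
  simp only [trace_fin_two, det_fin_two, mul_apply, Fin.sum_univ_two]
  ring

lemma Complex.exists_ofReal_of_nonneg {z : ℂ} (hz : 0 ≤ z) : ∃ x : ℝ, 0 ≤ x ∧ (x : ℂ) = z :=
  ⟨z.re, (Complex.nonneg_iff.mp hz).1,
    (Complex.eq_re_of_ofReal_le (Complex.ofReal_zero ▸ hz)).symm⟩

lemma trace_msqrt_fin_two {M : Matrix (Fin 2) (Fin 2) ℂ} (hM : M.PosSemidef) {p q : ℝ}
    (hp : M.trace = p) (hq : M.det = q) : (msqrt M).trace = √(p + 2 * √q) := by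
  have hS := posSemidef_msqrt hM
  have hSS := msqrt_mul_self hM
  obtain ⟨t, ht0, ht⟩ := Complex.exists_ofReal_of_nonneg hS.trace_nonneg
  obtain ⟨d, hd0, hd⟩ := Complex.exists_ofReal_of_nonneg hS.det_nonneg
  have hdq : d ^ 2 = q := by
    exact_mod_cast (show (d : ℂ) ^ 2 = q by rw [hd, sq, ← det_mul, hSS, hq])
  have htp : t ^ 2 = p + 2 * d := by
    have := trace_mul_self_fin_two (msqrt M)
    rw [hSS, hp, ← ht, ← hd] at this
    exact_mod_cast (by linear_combination -this : (t : ℂ) ^ 2 = p + 2 * d)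
  rw [← ht, ← hdq, Real.sqrt_sq hd0, ← htp, Real.sqrt_sq ht0]

lemma fidelity_fin_two {ρ σ : Matrix (Fin 2) (Fin 2) ℂ} (hρ : ρ.PosSemidef) (hσ : σ.PosSemidef)
    {p q : ℝ} (hp : (ρ * σ).trace = p) (hq : ρ.det * σ.det = q) :
    fidelity ρ σ = √(p + 2 * √q) := by
  have hB := posSemidef_msqrt hρ
  have hBB := msqrt_mul_self hρ
  refine trace_msqrt_fin_two ?_ ?_ ?_
  · simpa only [hB.isHermitian.eq] using hσ.mul_mul_conjTranspose_same (msqrt ρ)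
  · rw [trace_mul_cycle, hBB, hp]
  · rw [det_mul, det_mul, mul_right_comm, ← det_mul, hBB, hq]

section Phases

variable {n : Type*} [Fintype n] [DecidableEq n] {w : n → ℂ}

lemma mul_star_of_norm_eq_one {z : ℂ} (hz : ‖z‖ = 1) : z * star z = 1 := by
  rw [Complex.star_def, Complex.mul_conj', hz]; simp

lemma mul_mul_star_of_norm_eq_one {z : ℂ} (hz : ‖z‖ = 1) (a : ℂ) : z * a * star z = a := by
  rw [mul_right_comm, mul_star_of_norm_eq_one hz, one_mul]

lemma diagonal_mul_mul_conjTranspose_apply (w : n → ℂ) (A : Matrix n n ℂ) (i j : n) :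
    (diagonal w * A * (diagonal w)ᴴ) i j = w i * A i j * star (w j) := by
  simp [diagonal_conjTranspose]

lemma diagonal_mul_diagonal_mul_conjTranspose (hw : ∀ i, ‖w i‖ = 1) (d : n → ℂ) :
    diagonal w * diagonal d * (diagonal w)ᴴ = diagonal d := by
  ext i j
  rw [diagonal_mul_mul_conjTranspose_apply]
  rcases eq_or_ne i j with rfl | hij
  · exact mul_mul_star_of_norm_eq_one (hw i) _
  · simp [hij]

lemma trace_diagonal_mul_mul_conjTranspose (hw : ∀ i, ‖w i‖ = 1) (A : Matrix n n ℂ) :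
    (diagonal w * A * (diagonal w)ᴴ).trace = A.trace := by
  refine Finset.sum_congr rfl fun i _ => ?_
  rw [diag_apply, diagonal_mul_mul_conjTranspose_apply, mul_mul_star_of_norm_eq_one (hw i),
    diag_apply]

lemma det_diagonal_mul_mul_conjTranspose (hw : ∀ i, ‖w i‖ = 1) (A : Matrix n n ℂ) :
    (diagonal w * A * (diagonal w)ᴴ).det = A.det := by
  rw [det_mul, det_mul, det_conjTranspose, det_diagonal, mul_right_comm, star_prod,
    ← Finset.prod_mul_distrib, Finset.prod_eq_one fun i _ => ?_, one_mul]
  exact mul_star_of_norm_eq_one (hw i)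

end Phases

lemma trace_mul_diagonal_mul_mul_conjTranspose_add_two_mul_det {ρ : Matrix (Fin 2) (Fin 2) ℂ}
    (hρ : ρ.IsHermitian) {w : Fin 2 → ℂ} (hw : ∀ i, ‖w i‖ = 1) :
    (ρ * (diagonal w * ρ * (diagonal w)ᴴ)).trace + 2 * ρ.det =
      ρ.trace ^ 2 - Complex.normSq (ρ 0 1) * Complex.normSq (w 0 - w 1) := by
  have h10 : ρ 1 0 = star (ρ 0 1) := (hρ.apply 1 0).symm
  rw [trace_fin_two, mul_apply, mul_apply, Fin.sum_univ_two, Fin.sum_univ_two]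
  simp only [trace_fin_two, det_fin_two, diagonal_mul_mul_conjTranspose_apply, h10,
    Complex.normSq_eq_conj_mul_self, map_sub, ← Complex.star_def]
  linear_combination (ρ 0 0 ^ 2 + ρ 0 1 * star (ρ 0 1)) * mul_star_of_norm_eq_one (hw 0) +
    (ρ 1 1 ^ 2 + ρ 0 1 * star (ρ 0 1)) * mul_star_of_norm_eq_one (hw 1)

lemma fidelity_diagonal_mul_mul_conjTranspose {ρ : Matrix (Fin 2) (Fin 2) ℂ}
    (hρ : IsDensityMatrix ρ) {w : Fin 2 → ℂ} (hw : ∀ i, ‖w i‖ = 1) :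
    fidelity ρ (diagonal w * ρ * (diagonal w)ᴴ) =
      √(1 - Complex.normSq (ρ 0 1) * Complex.normSq (w 0 - w 1)) := by
  obtain ⟨hpsd, htr⟩ := hρ
  obtain ⟨d, hd0, hd⟩ := Complex.exists_ofReal_of_nonneg hpsd.det_nonneg
  have key := trace_mul_diagonal_mul_mul_conjTranspose_add_two_mul_det hpsd.isHermitian hw
  rw [htr, ← hd] at key
  rw [fidelity_fin_two hpsd (hpsd.mul_mul_conjTranspose_same _)
    (p := 1 - Complex.normSq (ρ 0 1) * Complex.normSq (w 0 - w 1) - 2 * d) (q := d ^ 2)]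
  · rw [Real.sqrt_sq hd0]; ring_nf
  · push_cast; linear_combination key
  · rw [det_diagonal_mul_mul_conjTranspose hw, ← hd]; push_cast; ring

lemma norm_expPhases {z : ℂ} (hz : z.re = 0) (i : Fin 2) : ‖expPhases z i‖ = 1 := by
  fin_cases i <;> simp [expPhases, Complex.norm_exp, hz]

lemma normSq_expPhases_sub (t : ℝ) :
    Complex.normSq (expPhases (-(Complex.I * t)) 0 - expPhases (-(Complex.I * t)) 1) =
      4 * Real.sin t ^ 2 := by
  have h : expPhases (-(Complex.I * t)) 0 - expPhases (-(Complex.I * t)) 1 =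
      (-2 * Real.sin t : ℝ) * Complex.I := by
    rw [expPhases, Matrix.cons_val_zero, Matrix.cons_val_one, Matrix.cons_val_zero, neg_neg,
      show -(Complex.I * t) = ((-t : ℝ) : ℂ) * Complex.I by push_cast; ring,
      mul_comm Complex.I, Complex.exp_mul_I, Complex.exp_mul_I]
    push_cast [Complex.cos_neg, Complex.sin_neg]
    ring
  rw [h, Complex.normSq_mul, Complex.normSq_I, Complex.normSq_ofReal]
  ring

lemma fidelity_exp_σz_conj {ρ : Matrix (Fin 2) (Fin 2) ℂ} (hρ : IsDensityMatrix ρ) (θ : ℝ) :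
    fidelity ρ (NormedSpace.exp ((-(Complex.I * θ)) • σz) * ρ *
        NormedSpace.exp ((Complex.I * θ) • σz)) =
      √(1 - 4 * Complex.normSq (ρ 0 1) * Real.sin θ ^ 2) := by
  have hσ : NormedSpace.exp ((Complex.I * θ) • σz) =
      (NormedSpace.exp ((-(Complex.I * θ)) • σz))ᴴ := by
    rw [exp_smul_σz_conjTranspose]
    congr 2
    simp [Complex.conj_ofReal]
  rw [hσ, exp_smul_σz,
    fidelity_diagonal_mul_mul_conjTranspose hρ (norm_expPhases (by simp)), normSq_expPhases_sub]
  ring_nf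

lemma rotY_conjTranspose (x : ℝ) : (rotY x)ᴴ = rotY (-x) := by
  ext i j
  fin_cases i <;> fin_cases j <;>
    simp [rotY, Complex.conj_ofReal, -Complex.ofReal_cos, -Complex.ofReal_sin]

lemma rotY_mul_diagonal_mul_conjTranspose (x : ℝ) (d : Fin 2 → ℂ) :
    rotY x * diagonal d * (rotY x)ᴴ =
      !![d 0 * Real.cos x ^ 2 + d 1 * Real.sin x ^ 2, (d 0 - d 1) * Real.cos x * Real.sin x;
        (d 0 - d 1) * Real.cos x * Real.sin x, d 0 * Real.sin x ^ 2 + d 1 * Real.cos x ^ 2] := by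
  rw [rotY_conjTranspose, rotY, rotY, diagonal_fin_two, mul_fin_two, mul_fin_two]
  push_cast [Real.cos_neg, Real.sin_neg]
  ring_nf

lemma eulerR_mul_diagonal_mul_conjTranspose (α β γ : ℝ) (d : Fin 2 → ℂ) :
    eulerR α β γ * diagonal d * (eulerR α β γ)ᴴ =
      diagonal (expPhases (-(Complex.I * α / 2))) *
        (rotY (β / 2) * diagonal d * (rotY (β / 2))ᴴ) *
        (diagonal (expPhases (-(Complex.I * α / 2))))ᴴ := by
  have hγ := diagonal_mul_diagonal_mul_conjTranspose
    (norm_expPhases (z := -(Complex.I * γ / 2)) (by simp)) d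
  rw [eulerR, exp_smul_σz, exp_smul_σz, exp_neg_I_mul_div_two_smul_σy, conjTranspose_mul,
    conjTranspose_mul]
  conv_rhs => rw [← hγ]
  simp only [Matrix.mul_assoc]

lemma isDensityMatrix_eulerR_mul_diagonal_mul_conjTranspose {lam : ℝ}
    (hlam : lam ∈ Set.Icc (0 : ℝ) 1) (α β γ : ℝ) :
    IsDensityMatrix (eulerR α β γ * diagonal ![(lam : ℂ), 1 - (lam : ℂ)] * (eulerR α β γ)ᴴ) := by
  have hD : (diagonal ![(lam : ℂ), 1 - (lam : ℂ)]).PosSemidef := by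
    refine posSemidef_diagonal_iff.mpr fun i => ?_
    fin_cases i
    · simpa using hlam.1
    · simpa [← Complex.ofReal_one, ← Complex.ofReal_sub] using hlam.2
  refine ⟨hD.mul_mul_conjTranspose_same _, ?_⟩
  have h : (Real.cos (β / 2) : ℂ) ^ 2 + (Real.sin (β / 2) : ℂ) ^ 2 = 1 := by
    exact_mod_cast Real.cos_sq_add_sin_sq (β / 2)
  rw [eulerR_mul_diagonal_mul_conjTranspose, trace_diagonal_mul_mul_conjTranspose
    (norm_expPhases (by simp)), rotY_mul_diagonal_mul_conjTranspose, trace_fin_two_of]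
  simp only [Matrix.cons_val_zero, Matrix.cons_val_one]
  linear_combination h

lemma normSq_eulerR_mul_diagonal_mul_conjTranspose_apply_zero_one (lam α β γ : ℝ) :
    4 * Complex.normSq
        ((eulerR α β γ * diagonal ![(lam : ℂ), 1 - (lam : ℂ)] * (eulerR α β γ)ᴴ) 0 1) =
      (2 * lam - 1) ^ 2 * Real.sin β ^ 2 := by
  have hphase (i : Fin 2) : Complex.normSq (expPhases (-(Complex.I * α / 2)) i) = 1 := by
    rw [Complex.normSq_eq_norm_sq, norm_expPhases (by simp), one_pow]
  have hentry : (rotY (β / 2) * diagonal ![(lam : ℂ), 1 - (lam : ℂ)] * (rotY (β / 2))ᴴ) 0 1 =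
      ((2 * lam - 1) * Real.cos (β / 2) * Real.sin (β / 2) : ℝ) := by
    rw [rotY_mul_diagonal_mul_conjTranspose]
    push_cast
    simp only [of_apply, Matrix.cons_val_zero, Matrix.cons_val_one]
    ring
  have hsin : Real.sin β = 2 * Real.sin (β / 2) * Real.cos (β / 2) := by
    rw [← Real.sin_two_mul, mul_div_cancel₀ β two_ne_zero]
  rw [eulerR_mul_diagonal_mul_conjTranspose, diagonal_mul_mul_conjTranspose_apply, hentry,
    Complex.normSq_mul, Complex.normSq_mul, Complex.star_def, Complex.normSq_conj, hphase,
    hphase, Complex.normSq_ofReal, hsin]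
  ring

/-- Fidelity formula in the spin-spin model:
`F(ρ₀, e^{−iθσ_z} ρ₀ e^{iθσ_z}) = √(1 − (2λ−1)² sin²β sin²θ)`. -/
theorem stmt_17 (lam α β γ θ : ℝ) (hlam : lam ∈ Set.Icc (0 : ℝ) 1)
    (ρ₀ : Matrix (Fin 2) (Fin 2) ℂ)
    (hρ₀ : ρ₀ = eulerR α β γ * Matrix.diagonal ![(lam : ℂ), 1 - (lam : ℂ)] *
      (eulerR α β γ)ᴴ) :
    fidelity ρ₀ (NormedSpace.exp ((-(Complex.I * (θ : ℂ))) • σz) * ρ₀ *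
        NormedSpace.exp ((Complex.I * (θ : ℂ)) • σz)) =
      (Real.sqrt (1 - (2 * lam - 1) ^ 2 * Real.sin β ^ 2 * Real.sin θ ^ 2) : ℂ) := by
  subst hρ₀
  rw [fidelity_exp_σz_conj (isDensityMatrix_eulerR_mul_diagonal_mul_conjTranspose hlam α β γ),
    normSq_eulerR_mul_diagonal_mul_conjTranspose_apply_zero_one]
end
end
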